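/- arXiv:2305.14136 — 6 statements merged into one kernel-verified Lean document; each statement's English description precedes it below -/
import Mathlib

section
/- Let h: ℝ × ℝ → ℝ be C¹ in x with h and h_x bounded and uniformly continuous on ℝ × K for every compact K. If x̃: ℝ → ℝ is a bounded solution of x' = h(t,x) whose variational equation z' = h_x(t, x̃(t)) z has an exponential dichotomy with stable direction (i.e., there exist k ≥ 1, β > 0 with exp(∫_s^t h_x(r, x̃(r)) dr) ≤ k e^{-β(t-s)} for all t ≥ s), then x̃ is locally uniformly exponentially attractive: there exist δ > 0, C ≥ 1 such that any solution x(t) with |x(s) - x̃(s)| < δ for some s satisfies |x(t) - x̃(t)| ≤ C e^{-(β/2)(t-s)} |x(s) - x̃(s)| for all t ≥ s. -/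
/-!
Write `y = x - x̃` and `a(t) = h_x(t, x̃(t))`. By uniform continuity of `h_x` there is `η > 0` such
that `h_x(t, ξ) ≤ a(t) + β/2` whenever `|ξ - x̃(t)| ≤ η`, so by the mean value theorem
`y y' ≤ (a + β/2) y²` as long as `|y| ≤ η`. On such a time interval `y² exp(-2∫(a + β/2))` is
nonincreasing, and the dichotomy estimate turns this into
`|y(t)| ≤ k e^{-(β/2)(t-s)} |y(s)|`. Starting with `|y(s)| < η/k`, this bound keeps `|y| < η`,
so by a continuity argument the estimate holds for all `t ≥ s`.
-/

open Set Real

theorem mul_sub_le_mul_sq_of_deriv_le {f f' : ℝ → ℝ} (hf : ∀ x, HasDerivAt f (f' x) x)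
    {x₀ x c : ℝ} (hc : ∀ ξ ∈ uIcc x₀ x, f' ξ ≤ c) :
    (x - x₀) * (f x - f x₀) ≤ c * (x - x₀) ^ 2 := by
  have slope_le : ∀ a ∈ uIcc x₀ x, ∀ b ∈ uIcc x₀ x, a ≤ b → f b - f a ≤ c * (b - a) :=
    (convex_uIcc x₀ x).image_sub_le_mul_sub_of_deriv_le
      (fun ξ _ => (hf ξ).continuousAt.continuousWithinAt)
      (fun ξ _ => (hf ξ).differentiableAt.differentiableWithinAt)
      (fun ξ hξ => (hf ξ).deriv ▸ hc ξ (interior_subset hξ))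
  rcases le_total x₀ x with h | h
  · nlinarith [slope_le x₀ left_mem_uIcc x right_mem_uIcc h]
  · nlinarith [slope_le x right_mem_uIcc x₀ left_mem_uIcc h]

theorem UniformContinuousOn.exists_pos_forall_le_add {g : ℝ → ℝ → ℝ} {K : Set ℝ}
    (hg : UniformContinuousOn (fun p : ℝ × ℝ => g p.1 p.2) (univ ×ˢ K)) {u : ℝ → ℝ}
    (hu : ∀ r, Metric.closedBall (u r) 1 ⊆ K) {ε : ℝ} (hε : 0 < ε) :
    ∃ η > 0, ∀ r ξ, |ξ - u r| ≤ η → g r ξ ≤ g r (u r) + ε := by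
  obtain ⟨δ, hδ, hgδ⟩ := Metric.uniformContinuousOn_iff.mp hg ε hε
  refine ⟨min (δ / 2) 1, by positivity, fun r ξ hξ => ?_⟩
  have hξK : ξ ∈ K := hu r (Metric.mem_closedBall.mpr (hξ.trans (min_le_right _ _)))
  have hdist : dist (r, ξ) (r, u r) < δ := by
    rw [Prod.dist_eq, dist_self, Real.dist_eq]
    exact max_lt hδ (by linarith [min_le_left (δ / 2) 1])
  have := hgδ (r, ξ) ⟨mem_univ r, hξK⟩ (r, u r)
    ⟨mem_univ r, hu r (Metric.mem_closedBall_self zero_le_one)⟩ hdist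
  rw [Real.dist_eq] at this
  linarith [le_abs_self (g r ξ - g r (u r))]

theorem abs_le_exp_integral_mul_abs {y y' a : ℝ → ℝ} (hy : ∀ u, HasDerivAt y (y' u) u)
    (ha : Continuous a) {s T : ℝ} (hsT : s ≤ T)
    (hle : ∀ u ∈ Ioo s T, y u * y' u ≤ a u * y u ^ 2) :
    |y T| ≤ exp (∫ r in s..T, a r) * |y s| := by
  set A : ℝ → ℝ := fun u => ∫ r in s..u, a r
  have hA : ∀ u, HasDerivAt A (a u) u := fun u =>
    intervalIntegral.integral_hasDerivAt_right (ha.intervalIntegrable _ _)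
      (ha.stronglyMeasurableAtFilter _ _) ha.continuousAt
  set F : ℝ → ℝ := fun u => y u ^ 2 * exp (-(2 * A u))
  have hF : ∀ u, HasDerivAt F
      (2 * exp (-(2 * A u)) * (y u * y' u - a u * y u ^ 2)) u := by
    intro u
    refine (((hy u).fun_pow 2).fun_mul (((hA u).const_mul 2).fun_neg.exp)).congr_deriv ?_
    push_cast
    ring
  have hanti : AntitoneOn F (Icc s T) := by
    refine antitoneOn_of_deriv_nonpos (convex_Icc s T)
      (fun u _ => (hF u).continuousAt.continuousWithinAt)
      (fun u _ => (hF u).differentiableAt.differentiableWithinAt) fun u hu => ?_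
    rw [interior_Icc] at hu
    rw [(hF u).deriv]
    exact mul_nonpos_of_nonneg_of_nonpos (by positivity) (sub_nonpos.mpr (hle u hu))
  have hFT : y T ^ 2 * exp (-(2 * A T)) ≤ y s ^ 2 := by
    simpa [F, A] using hanti (left_mem_Icc.mpr hsT) (right_mem_Icc.mpr hsT) hsT
  have hsq : y T ^ 2 ≤ (exp (A T) * |y s|) ^ 2 := by
    have hexp : exp (A T) ^ 2 * exp (-(2 * A T)) = 1 := by
      rw [← exp_nat_mul, ← exp_add]; norm_num
    calc y T ^ 2 = y T ^ 2 * exp (-(2 * A T)) * exp (A T) ^ 2 := by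
          rw [mul_assoc, mul_comm (exp _), hexp, mul_one]
      _ ≤ y s ^ 2 * exp (A T) ^ 2 := by gcongr
      _ = (exp (A T) * |y s|) ^ 2 := by rw [mul_pow, sq_abs, mul_comm]
  simpa [abs_of_nonneg (by positivity : 0 ≤ exp (A T) * |y s|)] using sq_le_sq.mp hsq

theorem Continuous.lt_of_bootstrap {f : ℝ → ℝ} (hf : Continuous f) {s η : ℝ}
    (h : ∀ T, s ≤ T → (∀ r ∈ Ioo s T, f r ≤ η) → f T < η) {t : ℝ} (hst : s ≤ t) :
    f t < η := by
  by_contra! ht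
  obtain ⟨T, ⟨⟨hsT, hTt⟩, hηT⟩, hleast⟩ :=
    (isCompact_Icc.inter_right (isClosed_le continuous_const hf)).exists_isLeast
      (⟨t, ⟨hst, le_rfl⟩, ht⟩ : (Icc s t ∩ {r | η ≤ f r}).Nonempty)
  refine (h T hsT fun r hr => ?_).not_ge hηT
  by_contra! hr'
  exact hr.2.not_ge (hleast ⟨⟨hr.1.le, hr.2.le.trans hTt⟩, hr'.le⟩)

theorem exp_integral_add_half_le {a : ℝ → ℝ} {k β s T : ℝ}
    (ha : IntervalIntegrable a MeasureTheory.volume s T)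
    (hdich : exp (∫ r in s..T, a r) ≤ k * exp (-β * (T - s))) :
    exp (∫ r in s..T, (a r + β / 2)) ≤ k * exp (-(β / 2) * (T - s)) := by
  rw [intervalIntegral.integral_add ha intervalIntegrable_const,
    intervalIntegral.integral_const, smul_eq_mul, exp_add]
  calc exp (∫ r in s..T, a r) * exp ((T - s) * (β / 2))
      ≤ k * exp (-β * (T - s)) * exp ((T - s) * (β / 2)) := by gcongr
    _ = k * exp (-(β / 2) * (T - s)) := by rw [mul_assoc, ← exp_add]; ring_nf

theorem first_approximation_attractive_general
    (h hx : ℝ → ℝ → ℝ)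
    (hderiv : ∀ t x, HasDerivAt (h t) (hx t x) x)
    (hxcont : Continuous fun p : ℝ × ℝ => hx p.1 p.2)
    (hucont : ∀ K : Set ℝ, IsCompact K →
      UniformContinuousOn (fun p : ℝ × ℝ => h p.1 p.2) (Set.univ ×ˢ K) ∧
      UniformContinuousOn (fun p : ℝ × ℝ => hx p.1 p.2) (Set.univ ×ˢ K))
    (xtil : ℝ → ℝ)
    (hsol : ∀ t, HasDerivAt xtil (h t (xtil t)) t)
    (hbdd : ∃ M : ℝ, ∀ t, |xtil t| ≤ M)
    (k β : ℝ) (hk : 1 ≤ k) (hβ : 0 < β)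
    (hdich : ∀ s t : ℝ, s ≤ t →
      Real.exp (∫ r in s..t, hx r (xtil r)) ≤ k * Real.exp (-β * (t - s))) :
    ∃ δ > 0, ∃ C : ℝ, 1 ≤ C ∧
      ∀ x : ℝ → ℝ, (∀ t, HasDerivAt x (h t (x t)) t) →
        ∀ s : ℝ, |x s - xtil s| < δ →
          ∀ t ≥ s, |x t - xtil t| ≤ C * Real.exp (-(β / 2) * (t - s)) * |x s - xtil s| := by
  obtain ⟨M, hM⟩ := hbdd
  have hball : ∀ r, Metric.closedBall (xtil r) 1 ⊆ Metric.closedBall 0 (M + 1) := fun r =>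
    Metric.closedBall_subset_closedBall' (by rw [Real.dist_eq, sub_zero]; linarith [hM r])
  obtain ⟨η, hη, hclose⟩ :=
    (hucont _ (isCompact_closedBall 0 (M + 1))).2.exists_pos_forall_le_add hball (half_pos hβ)
  have hkpos : 0 < k := zero_lt_one.trans_le hk
  refine ⟨η / k, by positivity, k, hk, fun x hxsol s hs t hst => ?_⟩
  have hxtil_cont : Continuous xtil := Differentiable.continuous fun t => (hsol t).differentiableAt
  have hx_cont : Continuous x := Differentiable.continuous fun t => (hxsol t).differentiableAt
  have ha : Continuous fun r => hx r (xtil r) := hxcont.comp (continuous_id.prodMk hxtil_cont)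
  have hy : ∀ u, HasDerivAt (fun u => x u - xtil u) (h u (x u) - h u (xtil u)) u :=
    fun u => (hxsol u).sub (hsol u)
  have decay : ∀ T, s ≤ T → (∀ r ∈ Ioo s T, |x r - xtil r| ≤ η) →
      |x T - xtil T| ≤ k * exp (-(β / 2) * (T - s)) * |x s - xtil s| := by
    intro T hsT hsmall
    calc |x T - xtil T| ≤ exp (∫ r in s..T, (hx r (xtil r) + β / 2)) * |x s - xtil s| :=
          abs_le_exp_integral_mul_abs hy (ha.add continuous_const) hsT fun u hu =>
            mul_sub_le_mul_sq_of_deriv_le (hderiv u) fun ξ hξ =>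
              hclose u ξ ((abs_sub_left_of_mem_uIcc hξ).trans (hsmall u hu))
      _ ≤ k * exp (-(β / 2) * (T - s)) * |x s - xtil s| := by
          gcongr; exact exp_integral_add_half_le (ha.intervalIntegrable s T) (hdich s T hsT)
  have hsmall : ∀ T, s ≤ T → |x T - xtil T| < η := fun T =>
    (hx_cont.sub hxtil_cont).abs.lt_of_bootstrap fun T hsT hsm =>
      calc |x T - xtil T| ≤ k * exp (-(β / 2) * (T - s)) * |x s - xtil s| := decay T hsT hsm
        _ ≤ k * 1 * |x s - xtil s| := by gcongr; exact exp_le_one_iff.mpr (by nlinarith)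
        _ < η := by rw [mul_one]; exact (lt_div_iff₀' hkpos).mp hs
  exact decay t hst fun r hr => (hsmall r hr.1.le).le

/-- First Approximation Theorem. An attractive hyperbolic bounded solution
(exponential dichotomy with stable direction of the variational equation) is locally
uniformly exponentially attractive forward in time. -/
theorem first_approximation_attractive
    (h hx : ℝ → ℝ → ℝ)
    (hcont : Continuous fun p : ℝ × ℝ => h p.1 p.2)
    (hderiv : ∀ t x, HasDerivAt (h t) (hx t x) x)
    (hxcont : Continuous fun p : ℝ × ℝ => hx p.1 p.2)
    (hbd : ∀ K : Set ℝ, IsCompact K → ∃ M : ℝ, ∀ t : ℝ, ∀ x ∈ K,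
      |h t x| ≤ M ∧ |hx t x| ≤ M)
    (hucont : ∀ K : Set ℝ, IsCompact K →
      UniformContinuousOn (fun p : ℝ × ℝ => h p.1 p.2) (Set.univ ×ˢ K) ∧
      UniformContinuousOn (fun p : ℝ × ℝ => hx p.1 p.2) (Set.univ ×ˢ K))
    (xtil : ℝ → ℝ)
    (hsol : ∀ t, HasDerivAt xtil (h t (xtil t)) t)
    (hbdd : ∃ M : ℝ, ∀ t, |xtil t| ≤ M)
    (k β : ℝ) (hk : 1 ≤ k) (hβ : 0 < β)
    (hdich : ∀ s t : ℝ, s ≤ t →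
      Real.exp (∫ r in s..t, hx r (xtil r)) ≤ k * Real.exp (-β * (t - s))) :
    ∃ δ > 0, ∃ C : ℝ, 1 ≤ C ∧
      ∀ x : ℝ → ℝ, (∀ t, HasDerivAt x (h t (x t)) t) →
        ∀ s : ℝ, |x s - xtil s| < δ →
          ∀ t ≥ s, |x t - xtil t| ≤ C * Real.exp (-(β / 2) * (t - s)) * |x s - xtil s| :=
  first_approximation_attractive_general h hx hderiv hxcont hucont xtil hsol hbdd k β hk hβ hdich
end

section
/- Let f: ℝ × ℝ → ℝ be continuous, locally Lipschitz in x, and coercive in the sense that limsup_{|x|→∞} sup_{t∈ℝ} f(t,x)/|x| < 0. Then every bounded solution of x' = f(t,x) which is defined on a half-line [s, ∞) remains in a fixed compact set: there exists ρ > 0 (independent of the solution) such that any solution defined and bounded on [s,∞) satisfies limsup_{t→∞} |x(t)| ≤ ρ; moreover the set of bounded solutions on ℝ, if nonempty, is uniformly bounded by ρ. -/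
/-! Where `|x| ≥ ρ` a solution decreases at rate at least `δ ρ`. Below `-ρ` it therefore
runs off to `-∞`, which a bounded solution cannot do; above `ρ` it reaches `ρ` in finite time,
and the level `ρ` is never crossed upwards. -/

open Filter Set

theorem tendsto_atBot_of_hasDerivAt_le_neg {y g : ℝ → ℝ} {a k : ℝ} (hk : 0 < k)
    (hy : ∀ t ≥ a, HasDerivAt y (g t) t) (hg : ∀ t ≥ a, g t ≤ -k) :
    Tendsto y atTop atBot := by
  have hcont : ContinuousOn y (Ici a) := fun t ht => (hy t ht).continuousAt.continuousWithinAt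
  have hlin : ∀ t ≥ a, y t ≤ y a + -k * (t - a) := by
    intro t ht
    have := (convex_Ici a).image_sub_le_mul_sub_of_deriv_le hcont
      (fun u hu => (hy u (interior_subset hu)).differentiableAt.differentiableWithinAt)
      (fun u hu => (hy u (interior_subset hu)).deriv ▸ hg u (interior_subset hu))
      a self_mem_Ici t ht ht
    linarith
  refine tendsto_atBot_mono' atTop ((eventually_ge_atTop a).mono hlin) ?_
  exact tendsto_atBot_add_const_left _ _ <|
    (tendsto_atTop_add_const_right _ _ tendsto_id).const_mul_atTop_of_neg (neg_lt_zero.2 hk)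

theorem le_of_hasDerivAt_neg_of_eq {y g : ℝ → ℝ} {a c : ℝ}
    (hy : ∀ t ≥ a, HasDerivAt y (g t) t) (hg : ∀ t ≥ a, y t = c → g t < 0) (ha : y a ≤ c) :
    ∀ t ≥ a, y t ≤ c := fun _ ht =>
  image_le_of_deriv_right_lt_deriv_boundary (B := fun _ => c) (B' := fun _ => 0)
    (fun u hu => (hy u hu.1).continuousAt.continuousWithinAt)
    (fun u hu => (hy u hu.1).hasDerivWithinAt) ha (fun _ => hasDerivAt_const _ c)
    (fun u hu => hg u hu.1) ⟨ht, le_rfl⟩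

section Coercive

variable {y g : ℝ → ℝ} {a δ ρ : ℝ}

theorem le_of_coercive (hδ : 0 < δ) (hρ : 0 < ρ) (hy : ∀ t ≥ a, HasDerivAt y (g t) t)
    (hg : ∀ t ≥ a, ρ ≤ |y t| → g t ≤ -δ * |y t|) {c : ℝ} (hc : ρ ≤ |c|) (ha : y a ≤ c) :
    ∀ t ≥ a, y t ≤ c := by
  refine le_of_hasDerivAt_neg_of_eq hy (fun t ht hyt => ?_) ha
  subst hyt
  have := hg t ht hc
  nlinarith

theorem tendsto_atBot_of_coercive_of_lt (hδ : 0 < δ) (hρ : 0 < ρ)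
    (hy : ∀ t ≥ a, HasDerivAt y (g t) t) (hg : ∀ t ≥ a, ρ ≤ |y t| → g t ≤ -δ * |y t|)
    (ha : y a < -ρ) : Tendsto y atTop atBot := by
  have hbelow : ∀ t ≥ a, y t ≤ y a :=
    le_of_coercive hδ hρ hy hg (by rw [abs_of_neg (by linarith)]; linarith) le_rfl
  refine tendsto_atBot_of_hasDerivAt_le_neg (mul_pos hδ hρ) hy fun t ht => ?_
  have hyt : ρ ≤ |y t| := by rw [abs_of_neg (by linarith [hbelow t ht])]; linarith [hbelow t ht]
  nlinarith [hg t ht hyt]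

theorem neg_le_of_coercive_of_abs_le (hδ : 0 < δ) (hρ : 0 < ρ)
    (hy : ∀ t ≥ a, HasDerivAt y (g t) t) (hg : ∀ t ≥ a, ρ ≤ |y t| → g t ≤ -δ * |y t|)
    {M : ℝ} (hM : ∀ t ≥ a, |y t| ≤ M) : ∀ t ≥ a, -ρ ≤ y t := by
  intro t ht
  by_contra! hyt
  have hbot := tendsto_atBot_of_coercive_of_lt hδ hρ (fun u hu => hy u (ht.trans hu))
    (fun u hu => hg u (ht.trans hu)) hyt
  obtain ⟨u, hyu, hu⟩ := ((hbot.eventually (eventually_lt_atBot (-M))).and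
    (eventually_ge_atTop a)).exists
  linarith [neg_abs_le (y u), hM u hu]

theorem exists_le_of_coercive (hδ : 0 < δ) (hρ : 0 < ρ)
    (hy : ∀ t ≥ a, HasDerivAt y (g t) t) (hg : ∀ t ≥ a, ρ ≤ |y t| → g t ≤ -δ * |y t|) :
    ∃ t ≥ a, y t ≤ ρ := by
  by_contra! habove
  have hbot : Tendsto y atTop atBot := by
    refine tendsto_atBot_of_hasDerivAt_le_neg (mul_pos hδ hρ) hy fun t ht => ?_
    have hyt := habove t ht
    have := hg t ht (by rw [abs_of_pos (by linarith)]; linarith)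
    rw [abs_of_pos (by linarith)] at this
    nlinarith
  obtain ⟨t, hyt, ht⟩ := ((hbot.eventually (eventually_le_atBot ρ)).and
    (eventually_ge_atTop a)).exists
  exact (habove t ht).not_ge hyt

theorem eventually_abs_le_of_coercive (hδ : 0 < δ) (hρ : 0 < ρ)
    (hy : ∀ t ≥ a, HasDerivAt y (g t) t) (hg : ∀ t ≥ a, ρ ≤ |y t| → g t ≤ -δ * |y t|)
    {M : ℝ} (hM : ∀ t ≥ a, |y t| ≤ M) : ∀ᶠ t in atTop, |y t| ≤ ρ := by
  obtain ⟨t₁, ht₁, hyt₁⟩ := exists_le_of_coercive hδ hρ hy hg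
  have hupper := le_of_coercive hδ hρ (fun u hu => hy u (ht₁.trans hu))
    (fun u hu => hg u (ht₁.trans hu)) (abs_of_pos hρ).ge hyt₁
  have hlower := neg_le_of_coercive_of_abs_le hδ hρ hy hg hM
  filter_upwards [eventually_ge_atTop t₁] with t ht
  exact abs_le.2 ⟨hlower t (ht₁.trans ht), hupper t ht⟩

theorem abs_le_of_coercive_of_bounded (hδ : 0 < δ) (hρ : 0 < ρ)
    (hy : ∀ t, HasDerivAt y (g t) t) (hg : ∀ t, ρ ≤ |y t| → g t ≤ -δ * |y t|)
    {M : ℝ} (hM : ∀ t, |y t| ≤ M) (t : ℝ) : |y t| ≤ ρ := by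
  have hlower := neg_le_of_coercive_of_abs_le hδ hρ (a := t) (fun u _ => hy u)
    (fun u _ => hg u) (fun u _ => hM u) t le_rfl
  -- `u ↦ -y (-u)` satisfies the same coercive inequality and turns an excursion above `ρ`
  -- into one below `-ρ`.
  have hrev : ∀ u, HasDerivAt (fun u => -y (-u)) (g (-u)) u := fun u => by
    have := ((hy (-u)).comp u (hasDerivAt_neg u)).neg
    rwa [mul_neg_one, neg_neg] at this
  have hupper := neg_le_of_coercive_of_abs_le hδ hρ (a := -t) (fun u _ => hrev u)
    (fun u _ => by simpa only [abs_neg] using hg (-u)) (fun u _ => by simpa using hM (-u))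
    (-t) le_rfl
  simp only [neg_neg] at hupper
  exact abs_le.2 ⟨hlower, by linarith⟩

end Coercive

theorem coercive_dissipativity_general
    (f : ℝ → ℝ → ℝ)
    (hcoer : ∃ δ > (0:ℝ), ∃ ρ₀ > (0:ℝ), ∀ t x : ℝ, ρ₀ ≤ |x| → f t x ≤ -δ * |x|) :
    ∃ ρ > (0:ℝ),
      (∀ (x : ℝ → ℝ) (s : ℝ),
        (∀ t ∈ Set.Ici s, HasDerivAt x (f t (x t)) t) →
        (∃ M : ℝ, ∀ t ∈ Set.Ici s, |x t| ≤ M) →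
        Filter.limsup (fun t => |x t|) Filter.atTop ≤ ρ) ∧
      (∀ x : ℝ → ℝ,
        (∀ t : ℝ, HasDerivAt x (f t (x t)) t) →
        (∃ M : ℝ, ∀ t : ℝ, |x t| ≤ M) →
        ∀ t : ℝ, |x t| ≤ ρ) := by
  obtain ⟨δ, hδ, ρ, hρ, hf⟩ := hcoer
  refine ⟨ρ, hρ, fun x s hx ⟨M, hM⟩ => ?_, fun x hx ⟨M, hM⟩ =>
    abs_le_of_coercive_of_bounded hδ hρ hx (fun t => hf t (x t)) hM⟩
  exact limsup_le_of_le (isCoboundedUnder_le_of_le atTop fun t => abs_nonneg (x t))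
    (eventually_abs_le_of_coercive hδ hρ hx (fun t _ => hf t (x t)) hM)

/-- coercivity forces dissipativity. There is a `ρ > 0` such that every
solution of `x' = f(t,x)` defined and bounded on a half-line `[s,∞)` satisfies
`limsup_{t→∞} |x(t)| ≤ ρ`, and every globally bounded solution stays in `[-ρ, ρ]`. -/
theorem coercive_dissipativity
    (f : ℝ → ℝ → ℝ)
    (hcont : Continuous fun p : ℝ × ℝ => f p.1 p.2)
    (hlip : ∀ t : ℝ, LocallyLipschitz (f t))
    (hcoer : ∃ δ > (0:ℝ), ∃ ρ₀ > (0:ℝ), ∀ t x : ℝ, ρ₀ ≤ |x| → f t x ≤ -δ * |x|) :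
    ∃ ρ > (0:ℝ),
      (∀ (x : ℝ → ℝ) (s : ℝ),
        (∀ t ∈ Set.Ici s, HasDerivAt x (f t (x t)) t) →
        (∃ M : ℝ, ∀ t ∈ Set.Ici s, |x t| ≤ M) →
        Filter.limsup (fun t => |x t|) Filter.atTop ≤ ρ) ∧
      (∀ x : ℝ → ℝ,
        (∀ t : ℝ, HasDerivAt x (f t (x t)) t) →
        (∃ M : ℝ, ∀ t : ℝ, |x t| ≤ M) →
        ∀ t : ℝ, |x t| ≤ ρ) :=
  coercive_dissipativity_general f hcoer
end

section
/- Let f: ℝ × ℝ → ℝ be continuous, C¹ in x, with f strictly concave in x uniformly in t, and suppose x' = f(t,x) has two uniformly separated hyperbolic bounded solutions r̃ < ã. Then the upper one ã is attractive (its variational equation has exponential dichotomy with exp(∫_s^t f_x(r,ã(r))dr) ≤ k e^{-β(t-s)} for t ≥ s) and the lower one r̃ is repulsive (exp(∫_s^t f_x(r,r̃(r))dr) ≤ k e^{β(t-s)} for t ≤ s). -/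
/-- in the uniformly strictly concave case, of two uniformly separated
hyperbolic bounded solutions the upper is attractive and the lower repulsive. -/
theorem concave_upper_attractive_lower_repulsive
    (f fx : ℝ → ℝ → ℝ)
    (hcont : Continuous fun p : ℝ × ℝ => f p.1 p.2)
    (hderiv : ∀ t x, HasDerivAt (f t) (fx t x) x)
    (hfxcont : Continuous fun p : ℝ × ℝ => fx p.1 p.2)
    (hconc : ∀ j : ℕ, ∃ δ > (0:ℝ), ∀ t : ℝ,
      ∀ x₁ ∈ Set.Icc (-(j:ℝ)) (j:ℝ), ∀ x₂ ∈ Set.Icc (-(j:ℝ)) (j:ℝ), x₁ ≠ x₂ →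
        (fx t x₂ - fx t x₁) / (x₂ - x₁) < -δ)
    (ra aa : ℝ → ℝ)
    (hrsol : ∀ t, HasDerivAt ra (f t (ra t)) t)
    (hasol : ∀ t, HasDerivAt aa (f t (aa t)) t)
    (hbdd : ∃ M : ℝ, ∀ t, |ra t| ≤ M ∧ |aa t| ≤ M)
    (hord : ∀ t, ra t < aa t)
    (hsep : ∃ d > (0:ℝ), ∀ t, d ≤ aa t - ra t)
    (hhyp_a : ∃ k ≥ (1:ℝ), ∃ β > (0:ℝ),
      (∀ s t : ℝ, s ≤ t →
        Real.exp (∫ r in s..t, fx r (aa r)) ≤ k * Real.exp (-β * (t - s))) ∨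
      (∀ s t : ℝ, t ≤ s →
        Real.exp (∫ r in s..t, fx r (aa r)) ≤ k * Real.exp (β * (t - s))))
    (hhyp_r : ∃ k ≥ (1:ℝ), ∃ β > (0:ℝ),
      (∀ s t : ℝ, s ≤ t →
        Real.exp (∫ r in s..t, fx r (ra r)) ≤ k * Real.exp (-β * (t - s))) ∨
      (∀ s t : ℝ, t ≤ s →
        Real.exp (∫ r in s..t, fx r (ra r)) ≤ k * Real.exp (β * (t - s)))) :
    (∃ k ≥ (1:ℝ), ∃ β > (0:ℝ), ∀ s t : ℝ, s ≤ t →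
        Real.exp (∫ r in s..t, fx r (aa r)) ≤ k * Real.exp (-β * (t - s))) ∧
    (∃ k ≥ (1:ℝ), ∃ β > (0:ℝ), ∀ s t : ℝ, t ≤ s →
        Real.exp (∫ r in s..t, fx r (ra r)) ≤ k * Real.exp (β * (t - s))) := by
  obtain ⟨M, hM⟩ := hbdd
  obtain ⟨d, hd, hs⟩ := hsep
  -- continuity of the solutions
  have hra : Continuous ra := continuous_iff_continuousAt.mpr fun t => (hrsol t).continuousAt
  have haa : Continuous aa := continuous_iff_continuousAt.mpr fun t => (hasol t).continuousAt
  have hzpos : ∀ t, 0 < aa t - ra t := fun t => sub_pos.mpr (hord t)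
  set c : ℝ → ℝ := fun t => (f t (aa t) - f t (ra t)) / (aa t - ra t) with hc
  have hc_cont : Continuous c := by
    apply Continuous.div
    · exact (hcont.comp (continuous_id.prodMk haa)).sub
        (hcont.comp (continuous_id.prodMk hra))
    · exact haa.sub hra
    · exact fun t => (hzpos t).ne'
  have hfr_cont : Continuous fun t => fx t (ra t) := hfxcont.comp (continuous_id.prodMk hra)
  have hfa_cont : Continuous fun t => fx t (aa t) := hfxcont.comp (continuous_id.prodMk haa)
  -- key bound via mean value theorem and concavity
  have key : ∀ t, fx t (aa t) ≤ c t ∧ c t ≤ fx t (ra t) := by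
    intro t
    have hMj : M ≤ ((⌈M⌉₊ : ℕ) : ℝ) := Nat.le_ceil M
    have hmem : ∀ x, |x| ≤ M → x ∈ Set.Icc (-((⌈M⌉₊ : ℕ) : ℝ)) ((⌈M⌉₊ : ℕ) : ℝ) := by
      intro x hx
      obtain ⟨h1, h2⟩ := abs_le.mp hx
      exact ⟨by linarith, by linarith⟩
    obtain ⟨δ, hδ, hsl⟩ := hconc ⌈M⌉₊
    have hfc : ContinuousOn (f t) (Set.Icc (ra t) (aa t)) :=
      (hcont.comp (continuous_const.prodMk continuous_id)).continuousOn
    obtain ⟨ξ, hξ, hξeq⟩ := exists_hasDerivAt_eq_slope (f t) (fx t) (hord t) hfc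
      (fun x _ => hderiv t x)
    have hra_mem := hmem _ (hM t).1
    have haa_mem := hmem _ (hM t).2
    have hξ_mem : ξ ∈ Set.Icc (-((⌈M⌉₊ : ℕ) : ℝ)) ((⌈M⌉₊ : ℕ) : ℝ) := by
      constructor
      · linarith [hξ.1, hra_mem.1]
      · linarith [hξ.2, haa_mem.2]
    have hcξ : c t = fx t ξ := hξeq.symm
    constructor
    · have h2 := hsl t ξ hξ_mem (aa t) haa_mem hξ.2.ne
      have hp : 0 < aa t - ξ := sub_pos.mpr hξ.2
      rw [div_lt_iff₀ hp] at h2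
      have : fx t (aa t) - fx t ξ < 0 := by nlinarith
      rw [hcξ]; linarith
    · have h1 := hsl t (ra t) hra_mem ξ hξ_mem hξ.1.ne
      have hp : 0 < ξ - ra t := sub_pos.mpr hξ.1
      rw [div_lt_iff₀ hp] at h1
      have : fx t ξ - fx t (ra t) < 0 := by nlinarith
      rw [hcξ]; linarith
  -- the log of the separation integrates c
  have hL : ∀ t : ℝ, HasDerivAt (fun u => Real.log (aa u - ra u)) (c t) t := fun t =>
    HasDerivAt.log ((hasol t).sub (hrsol t)) (hzpos t).ne'
  have hint : ∀ T : ℝ, ∫ u in (0:ℝ)..T, c u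
      = Real.log (aa T - ra T) - Real.log (aa 0 - ra 0) := fun T =>
    intervalIntegral.integral_eq_sub_of_hasDerivAt (fun u _ => hL u)
      (hc_cont.intervalIntegrable _ _)
  -- bounds on the separation
  have hz2M : ∀ t, aa t - ra t ≤ 2 * M := by
    intro t
    obtain ⟨h1, h2⟩ := abs_le.mp (hM t).1
    obtain ⟨h3, h4⟩ := abs_le.mp (hM t).2
    linarith
  have hd2M : d ≤ 2 * M := le_trans (hs 0) (hz2M 0)
  have hlog_up : ∀ t, Real.log (aa t - ra t) ≤ Real.log (2 * M) :=
    fun t => Real.log_le_log (hzpos t) (hz2M t)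
  have hlog_dn : ∀ t, Real.log d ≤ Real.log (aa t - ra t) :=
    fun t => Real.log_le_log hd (hs t)
  have hlog_dM : Real.log d ≤ Real.log (2 * M) := Real.log_le_log hd hd2M
  constructor
  · obtain ⟨k, hk, β, hβ, ha | ha⟩ := hhyp_a
    · exact ⟨k, hk, β, hβ, ha⟩
    · exfalso
      have hk0 : (0:ℝ) < k := lt_of_lt_of_le one_pos hk
      have hlogk : 0 ≤ Real.log k := Real.log_nonneg hk
      obtain ⟨T, hT⟩ : ∃ T : ℝ, T = (Real.log (2 * M) + Real.log k - Real.log d) / β + 1 :=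
        ⟨_, rfl⟩
      have hT0 : 0 ≤ T := by
        have : 0 ≤ (Real.log (2 * M) + Real.log k - Real.log d) / β :=
          div_nonneg (by linarith) hβ.le
        linarith
      have h1 := ha T 0 hT0
      have h2 : (∫ r in T..(0:ℝ), fx r (aa r)) ≤ Real.log k + β * (0 - T) := by
        have := Real.log_le_log (Real.exp_pos _) h1
        rwa [Real.log_exp, Real.log_mul hk0.ne' (Real.exp_ne_zero _), Real.log_exp] at this
      have h3 : (∫ r in T..(0:ℝ), fx r (aa r)) = -∫ r in (0:ℝ)..T, fx r (aa r) :=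
        intervalIntegral.integral_symm 0 T
      have h4 : β * T - Real.log k ≤ ∫ r in (0:ℝ)..T, fx r (aa r) := by
        rw [h3] at h2; linarith
      have h5 : (∫ r in (0:ℝ)..T, fx r (aa r)) ≤ ∫ u in (0:ℝ)..T, c u :=
        intervalIntegral.integral_mono_on hT0 (hfa_cont.intervalIntegrable _ _)
          (hc_cont.intervalIntegrable _ _) (fun x _ => (key x).1)
      have h6 := hint T
      have h7 := hlog_up T
      have h8 := hlog_dn 0
      have hβT : β * T = Real.log (2 * M) + Real.log k - Real.log d + β := by
        rw [hT]; field_simp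
      linarith
  · obtain ⟨k, hk, β, hβ, hr | hr⟩ := hhyp_r
    · exfalso
      have hk0 : (0:ℝ) < k := lt_of_lt_of_le one_pos hk
      have hlogk : 0 ≤ Real.log k := Real.log_nonneg hk
      obtain ⟨T, hT⟩ : ∃ T : ℝ, T = (Real.log (2 * M) + Real.log k - Real.log d) / β + 1 :=
        ⟨_, rfl⟩
      have hT0 : 0 ≤ T := by
        have : 0 ≤ (Real.log (2 * M) + Real.log k - Real.log d) / β :=
          div_nonneg (by linarith) hβ.le
        linarith
      have h1 := hr 0 T hT0
      have h2 : (∫ r in (0:ℝ)..T, fx r (ra r)) ≤ Real.log k + -β * (T - 0) := by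
        have := Real.log_le_log (Real.exp_pos _) h1
        rwa [Real.log_exp, Real.log_mul hk0.ne' (Real.exp_ne_zero _), Real.log_exp] at this
      have h5 : (∫ u in (0:ℝ)..T, c u) ≤ ∫ r in (0:ℝ)..T, fx r (ra r) :=
        intervalIntegral.integral_mono_on hT0 (hc_cont.intervalIntegrable _ _)
          (hfr_cont.intervalIntegrable _ _) (fun x _ => (key x).2)
      have h6 := hint T
      have h7 := hlog_up 0
      have h8 := hlog_dn T
      have hβT : β * T = Real.log (2 * M) + Real.log k - Real.log d + β := by
        rw [hT]; field_simp
      linarith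
    · exact ⟨k, hk, β, hβ, hr⟩
end

section
/- Let f satisfy the concave hypotheses: continuous, C¹ in x, coercive (limsup_{|x|→∞} f(t,x)/|x| < 0 uniformly in t), and strictly concave in x uniformly in t. If the set B of globally bounded solutions of x' = f(t,x) is nonempty, then B is uniformly bounded and there exist two (possibly equal) bounded solutions r ≤ a such that B = {(s,x₀) : r(s) ≤ x₀ ≤ a(s)}; that is, x₀ is the value at time s of a bounded solution if and only if r(s) ≤ x₀ ≤ a(s). -/
/-!
Coercivity confines every globally bounded solution to `[-ρ₀, ρ₀]`: a solution that reaches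
`-ρ₀` afterwards falls at a linear rate, and one above `ρ₀` grows linearly backwards in time.
Since `f` is locally Lipschitz in `x`, solutions of a scalar equation cannot cross, so bounded
solutions are totally ordered. Choosing bounded solutions whose values at time `0` increase to
their supremum, the monotone limit is again a solution (pass to the limit in the integral
equation): this is the largest bounded solution `a`, and the reflection `x ↦ -x` yields the
smallest one `r`. Finally, through any point between `r` and `a` the solution of the field with
`x` clamped to `[-ρ₀, ρ₀]` stays between `r` and `a` on every time window, so it solves the
original equation, exists for all time and is bounded.
-/

open Set Filter Topology Function Metric NNReal

def IsSolution (f : ℝ → ℝ → ℝ) (x : ℝ → ℝ) : Prop := ∀ t, HasDerivAt x (f t (x t)) t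

variable {f fx : ℝ → ℝ → ℝ} {x y : ℝ → ℝ} {ρ : ℝ}

namespace IsSolution

theorem continuous (hx : IsSolution f x) : Continuous x :=
  continuous_iff_continuousAt.2 fun t => (hx t).continuousAt

theorem comp_neg_neg (hx : IsSolution f x) :
    IsSolution (fun t z => f (-t) (-z)) (fun t => -x (-t)) := fun t => by
  simpa using ((hx (-t)).comp t (hasDerivAt_neg t)).fun_neg

theorem neg (hx : IsSolution f x) : IsSolution (fun t z => -f t (-z)) (-x) := fun t => by
  simpa using (hx t).neg

theorem neg_lt_of_bounded {δ : ℝ} (hδ : 0 < δ) (hρ : 0 < ρ)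
    (hco : ∀ t z, ρ ≤ |z| → f t z ≤ -δ * |z|) (hx : IsSolution f x)
    (hxb : ∃ M, ∀ t, |x t| ≤ M) (s : ℝ) : -ρ < x s := by
  obtain ⟨M, hM⟩ := hxb
  by_contra! hs
  have hε : 0 < δ * ρ / 2 := by positivity
  -- Below `-ρ` the solution falls faster than a line of slope `-δρ/2`, so it escapes to `-∞`.
  have hfence : ∀ t ∈ Icc s (s + (M + 1) / (δ * ρ / 2)), x t ≤ x s - δ * ρ / 2 * (t - s) := by
    refine image_le_of_deriv_right_lt_deriv_boundary hx.continuous.continuousOn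
      (fun t _ => (hx t).hasDerivWithinAt) (by simp) (B' := fun _ => -(δ * ρ / 2))
      (fun t => by simpa using
        (((hasDerivAt_id t).sub_const s).const_mul (δ * ρ / 2)).const_sub (x s))
      fun t ht hxt => ?_
    have hxt' : x t ≤ -ρ := by nlinarith [ht.1]
    have hρx : δ * ρ ≤ δ * |x t| :=
      mul_le_mul_of_nonneg_left (by rw [abs_of_neg (by linarith)]; linarith) hδ.le
    linarith [hco t (x t) (by rw [abs_of_neg (by linarith)]; linarith)]
  have hM0 : 0 ≤ M := (abs_nonneg _).trans (hM s)
  have hend := hfence _ ⟨le_add_of_nonneg_right (by positivity), le_rfl⟩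
  rw [add_sub_cancel_left, mul_div_cancel₀ _ hε.ne'] at hend
  linarith [neg_abs_le (x (s + (M + 1) / (δ * ρ / 2))), hM (s + (M + 1) / (δ * ρ / 2))]

theorem abs_lt_of_bounded {δ : ℝ} (hδ : 0 < δ) (hρ : 0 < ρ)
    (hco : ∀ t z, ρ ≤ |z| → f t z ≤ -δ * |z|) (hx : IsSolution f x)
    (hxb : ∃ M, ∀ t, |x t| ≤ M) (s : ℝ) : |x s| < ρ := by
  obtain ⟨M, hM⟩ := hxb
  have hrev := hx.comp_neg_neg.neg_lt_of_bounded hδ hρ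
    (fun t z hz => by simpa using hco (-t) (-z) (by rwa [abs_neg]))
    ⟨M, fun t => by simpa using hM (-t)⟩ (-s)
  rw [neg_neg, neg_lt_neg_iff] at hrev
  exact abs_lt.2 ⟨hx.neg_lt_of_bounded hδ hρ hco ⟨M, hM⟩ s, hrev⟩

end IsSolution

theorem ODE_solution_unique_of_mem_uIcc {v : ℝ → ℝ → ℝ} {S : Set ℝ} {K : ℝ≥0} {c d : ℝ}
    (hv : ∀ t ∈ uIcc c d, LipschitzOnWith K (v t) S)
    (hx : ∀ t ∈ uIcc c d, HasDerivAt x (v t (x t)) t ∧ x t ∈ S)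
    (hy : ∀ t ∈ uIcc c d, HasDerivAt y (v t (y t)) t ∧ y t ∈ S) (hc : x c = y c) :
    EqOn x y (uIcc c d) := by
  have hxc : ContinuousOn x (uIcc c d) := fun t ht => (hx t ht).1.continuousAt.continuousWithinAt
  have hyc : ContinuousOn y (uIcc c d) := fun t ht => (hy t ht).1.continuousAt.continuousWithinAt
  rcases le_total c d with hcd | hdc
  · rw [uIcc_of_le hcd] at *
    exact ODE_solution_unique_of_mem_Icc_right (fun t ht => hv t (Ico_subset_Icc_self ht)) hxc
      (fun t ht => (hx t (Ico_subset_Icc_self ht)).1.hasDerivWithinAt)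
      (fun t ht => (hx t (Ico_subset_Icc_self ht)).2) hyc
      (fun t ht => (hy t (Ico_subset_Icc_self ht)).1.hasDerivWithinAt)
      (fun t ht => (hy t (Ico_subset_Icc_self ht)).2) hc
  · rw [uIcc_of_ge hdc] at *
    exact ODE_solution_unique_of_mem_Icc_left (fun t ht => hv t (Ioc_subset_Icc_self ht)) hxc
      (fun t ht => (hx t (Ioc_subset_Icc_self ht)).1.hasDerivWithinAt)
      (fun t ht => (hx t (Ioc_subset_Icc_self ht)).2) hyc
      (fun t ht => (hy t (Ioc_subset_Icc_self ht)).1.hasDerivWithinAt)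
      (fun t ht => (hy t (Ioc_subset_Icc_self ht)).2) hc

theorem ODE_solution_le_of_mem_Icc {v : ℝ → ℝ → ℝ} {S : Set ℝ} {K : ℝ≥0} {a b s : ℝ}
    (hv : ∀ t ∈ Icc a b, LipschitzOnWith K (v t) S)
    (hx : ∀ t ∈ Icc a b, HasDerivAt x (v t (x t)) t ∧ x t ∈ S)
    (hy : ∀ t ∈ Icc a b, HasDerivAt y (v t (y t)) t ∧ y t ∈ S)
    (hs : s ∈ Icc a b) (hxy : x s ≤ y s) {t : ℝ} (ht : t ∈ Icc a b) : x t ≤ y t := by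
  by_contra! hlt
  have hsub : uIcc s t ⊆ Icc a b := uIcc_subset_Icc hs ht
  obtain ⟨c, hc, hxyc⟩ : ∃ c ∈ uIcc s t, y c - x c = 0 := by
    refine intermediate_value_uIcc (f := fun u => y u - x u) (fun u hu => ?_) ?_
    · exact ((hy u (hsub hu)).1.continuousAt.sub
        (hx u (hsub hu)).1.continuousAt).continuousWithinAt
    · exact mem_uIcc.2 (Or.inr ⟨by linarith, by linarith⟩)
  have hsub' : uIcc c t ⊆ Icc a b := uIcc_subset_Icc (hsub hc) ht
  have := ODE_solution_unique_of_mem_uIcc (fun u hu => hv u (hsub' hu))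
    (fun u hu => hx u (hsub' hu)) (fun u hu => hy u (hsub' hu)) (by linarith) right_mem_uIcc
  linarith

theorem exists_lipschitzOnWith_of_hasDerivAt {T S : Set ℝ} (hT : IsCompact T)
    (hS : IsCompact S) (hSc : Convex ℝ S) (hderiv : ∀ t z, HasDerivAt (f t) (fx t z) z)
    (hfx : Continuous (uncurry fx)) : ∃ K, ∀ t ∈ T, LipschitzOnWith K (f t) S := by
  obtain ⟨C, hC⟩ := (hT.prod hS).exists_bound_of_continuousOn hfx.continuousOn
  refine ⟨C.toNNReal, fun t ht => hSc.lipschitzOnWith_of_nnnorm_hasDerivWithin_le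
    (fun z _ => (hderiv t z).hasDerivWithinAt) fun z hz => ?_⟩
  rw [← NNReal.coe_le_coe, coe_nnnorm]
  exact (hC (t, z) ⟨ht, hz⟩).trans (Real.le_coe_toNNReal C)

theorem exists_hasDerivAt_Ioo_of_lipschitzWith {v : ℝ → ℝ → ℝ} {K : ℝ≥0} {C a b s : ℝ}
    (hs : s ∈ Icc a b) (hv : ∀ t ∈ Icc a b, LipschitzWith K (v t))
    (hvc : ∀ z, ContinuousOn (v · z) (Icc a b)) (hC : ∀ t ∈ Icc a b, ∀ z, |v t z| ≤ C)
    (x₀ : ℝ) : ∃ x : ℝ → ℝ, x s = x₀ ∧ ∀ t ∈ Ioo a b, HasDerivAt x (v t (x t)) t := by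
  have hC₀ : 0 ≤ C := (abs_nonneg _).trans (hC s hs 0)
  have hpl : IsPicardLindelof v ⟨s, hs⟩ x₀ ⟨C * (b - a), by nlinarith [hs.1, hs.2]⟩ 0
      ⟨C, hC₀⟩ K :=
    { lipschitzOnWith := fun t ht => (hv t ht).lipschitzOnWith
      continuousOn := fun z _ => hvc z
      norm_le := fun t ht z _ => hC t ht z
      mul_max_le := by
        show C * max (b - s) (s - a) ≤ C * (b - a) - 0
        rw [sub_zero]
        exact mul_le_mul_of_nonneg_left (max_le (by linarith [hs.1]) (by linarith [hs.2])) hC₀ }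
  obtain ⟨x, hx₀, hx⟩ := hpl.exists_eq_forall_mem_Icc_hasDerivWithinAt₀
  exact ⟨x, hx₀, fun t ht =>
    (hx t (Ioo_subset_Icc_self ht)).hasDerivAt (Icc_mem_nhds ht.1 ht.2)⟩

theorem exists_forall_eqOn_closedBall {X β : Type*} [PseudoMetricSpace X] {z : ℕ → X → β}
    {s : X} (h : ∀ m n, m ≤ n → EqOn (z m) (z n) (closedBall s m)) :
    ∃ x : X → β, ∀ n, EqOn x (z n) (closedBall s n) :=
  ⟨fun p => z ⌈dist p s⌉₊ p, fun n p hp =>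
    h _ n (Nat.ceil_le.2 hp) (Nat.le_ceil (dist p s))⟩

namespace IsSolution

theorem le_of_le (hderiv : ∀ t z, HasDerivAt (f t) (fx t z) z) (hfx : Continuous (uncurry fx))
    (hx : IsSolution f x) (hy : IsSolution f y) (hxb : ∀ t, |x t| ≤ ρ) (hyb : ∀ t, |y t| ≤ ρ)
    {s : ℝ} (hxy : x s ≤ y s) (t : ℝ) : x t ≤ y t := by
  obtain ⟨K, hK⟩ := exists_lipschitzOnWith_of_hasDerivAt isCompact_uIcc isCompact_Icc
    (convex_Icc (-ρ) ρ) hderiv hfx (T := uIcc s t)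
  exact ODE_solution_le_of_mem_Icc hK (fun u _ => ⟨hx u, abs_le.1 (hxb u)⟩)
    (fun u _ => ⟨hy u, abs_le.1 (hyb u)⟩) left_mem_uIcc hxy right_mem_uIcc

variable {ys : ℕ → ℝ → ℝ} {φ : ℝ → ℝ}

theorem continuous_of_tendsto (hcont : Continuous (uncurry f))
    (hys : ∀ n, IsSolution f (ys n)) (hb : ∀ n t, |ys n t| ≤ ρ)
    (hφ : ∀ t, Tendsto (fun n => ys n t) atTop (𝓝 (φ t))) : Continuous φ := by
  refine continuous_iff_continuousAt.2 fun t => ?_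
  obtain ⟨C, hC⟩ := ((isCompact_closedBall t 1).prod isCompact_Icc).exists_bound_of_continuousOn
    hcont.continuousOn (s := closedBall t 1 ×ˢ Icc (-ρ) ρ)
  have hlip : ∀ n, LipschitzOnWith C.toNNReal (ys n) (closedBall t 1) := fun n =>
    (convex_closedBall t 1).lipschitzOnWith_of_nnnorm_hasDerivWithin_le
      (fun u _ => (hys n u).hasDerivWithinAt) fun u hu => by
        rw [← NNReal.coe_le_coe, coe_nnnorm]
        exact (hC (u, ys n u) ⟨hu, abs_le.1 (hb n u)⟩).trans (Real.le_coe_toNNReal C)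
  have hφlip : LipschitzOnWith C.toNNReal φ (closedBall t 1) :=
    (isClosed_setOfPred_lipschitzOnWith _ _).mem_of_tendsto (tendsto_pi_nhds.2 hφ)
      (Eventually.of_forall hlip)
  exact hφlip.continuousOn.continuousAt (closedBall_mem_nhds t one_pos)

theorem integral_eq_sub_of_tendsto (hcont : Continuous (uncurry f))
    (hys : ∀ n, IsSolution f (ys n)) (hb : ∀ n t, |ys n t| ≤ ρ)
    (hφ : ∀ t, Tendsto (fun n => ys n t) atTop (𝓝 (φ t))) (t u : ℝ) :
    ∫ τ in t..u, f τ (φ τ) = φ u - φ t := by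
  have hφc := continuous_of_tendsto hcont hys hb hφ
  obtain ⟨C, hC⟩ := (isCompact_uIcc.prod isCompact_Icc).exists_bound_of_continuousOn
    hcont.continuousOn (s := uIcc t u ×ˢ Icc (-ρ) ρ)
  have hint : ∀ n, ∫ τ in t..u, f τ (ys n τ) = ys n u - ys n t := fun n =>
    intervalIntegral.integral_eq_sub_of_hasDerivAt (fun τ _ => hys n τ)
      ((hcont.comp (continuous_id.prodMk (hys n).continuous)).intervalIntegrable t u)
  have hlim : Tendsto (fun n => ∫ τ in t..u, f τ (ys n τ)) atTop
      (𝓝 (∫ τ in t..u, f τ (φ τ))) := by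
    refine intervalIntegral.tendsto_integral_filter_of_dominated_convergence (fun _ => C)
      (Eventually.of_forall fun n =>
        (hcont.comp (continuous_id.prodMk (hys n).continuous)).aestronglyMeasurable)
      (Eventually.of_forall fun n => MeasureTheory.ae_of_all _ fun τ hτ =>
        hC (τ, ys n τ) ⟨uIoc_subset_uIcc hτ, abs_le.1 (hb n τ)⟩)
      intervalIntegrable_const (MeasureTheory.ae_of_all _ fun τ _ => ?_)
    exact (hcont.comp (continuous_const.prodMk continuous_id)).continuousAt.tendsto.comp (hφ τ)
  simp only [hint] at hlim
  exact tendsto_nhds_unique hlim ((hφ u).sub (hφ t))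

theorem of_tendsto (hcont : Continuous (uncurry f))
    (hys : ∀ n, IsSolution f (ys n)) (hb : ∀ n t, |ys n t| ≤ ρ)
    (hφ : ∀ t, Tendsto (fun n => ys n t) atTop (𝓝 (φ t))) : IsSolution f φ := fun t => by
  have hF : Continuous fun τ => f τ (φ τ) :=
    hcont.comp (continuous_id.prodMk (continuous_of_tendsto hcont hys hb hφ))
  have hD := (intervalIntegral.integral_hasDerivAt_right (hF.intervalIntegrable t t)
    (hF.stronglyMeasurableAtFilter _ _) hF.continuousAt).const_add (φ t)
  refine hD.congr_of_eventuallyEq (Eventually.of_forall fun u => ?_)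
  simp only [integral_eq_sub_of_tendsto hcont hys hb hφ, add_sub_cancel]

end IsSolution

theorem exists_solution_on_closedBall_between {r a : ℝ → ℝ}
    (hcont : Continuous (uncurry f)) (hderiv : ∀ t z, HasDerivAt (f t) (fx t z) z)
    (hfx : Continuous (uncurry fx)) (hr : IsSolution f r) (ha : IsSolution f a)
    (hrb : ∀ t, |r t| ≤ ρ) (hab : ∀ t, |a t| ≤ ρ) {s x₀ : ℝ} (h₁ : r s ≤ x₀) (h₂ : x₀ ≤ a s)
    (n : ℕ) : ∃ z : ℝ → ℝ, z s = x₀ ∧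
      ∀ t ∈ closedBall s n, HasDerivAt z (f t (z t)) t ∧ r t ≤ z t ∧ z t ≤ a t := by
  have hρ : -ρ ≤ ρ := neg_le_self ((abs_nonneg _).trans (hrb s))
  set W := Icc (s - (n + 1)) (s + (n + 1))
  have hsW : s ∈ W := ⟨by linarith, by linarith⟩
  have hball : closedBall s n ⊆ Ioo (s - (n + 1)) (s + (n + 1)) := by
    rw [Real.closedBall_eq_Icc]; exact Icc_subset_Ioo (by linarith) (by linarith)
  obtain ⟨K, hK⟩ := exists_lipschitzOnWith_of_hasDerivAt isCompact_Icc isCompact_Icc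
    (convex_Icc (-ρ) ρ) hderiv hfx (T := W)
  obtain ⟨C, hC⟩ := (isCompact_Icc.prod isCompact_Icc).exists_bound_of_continuousOn
    hcont.continuousOn (s := W ×ˢ Icc (-ρ) ρ)
  -- Clamping the state to `[-ρ, ρ]` gives a globally Lipschitz field that agrees with `f`
  -- along `r` and `a`; the clamped solution stays between them, so it never feels the clamp.
  set c : ℝ → ℝ := fun z => max (-ρ) (min ρ z)
  have hcmem : ∀ z, c z ∈ Icc (-ρ) ρ := fun z => ⟨le_max_left _ _, max_le hρ (min_le_left _ _)⟩
  have hceq : ∀ z ∈ Icc (-ρ) ρ, c z = z := fun z hz => by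
    simp only [c, min_eq_right hz.2, max_eq_right hz.1]
  have hv : ∀ t ∈ W, LipschitzWith (K * 1) fun z => f t (c z) := fun t ht =>
    lipschitzOnWith_univ.1 <| (hK t ht).comp
      ((LipschitzWith.id.const_min ρ).const_max (-ρ)).lipschitzOnWith fun z _ => hcmem z
  obtain ⟨z, hzs, hz⟩ := exists_hasDerivAt_Ioo_of_lipschitzWith hsW hv
    (fun z => (hcont.comp (continuous_id.prodMk continuous_const)).continuousOn)
    (fun t ht z => hC (t, c z) ⟨ht, hcmem z⟩) x₀
  have hsol : ∀ w : ℝ → ℝ, IsSolution f w → (∀ t, |w t| ≤ ρ) →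
      ∀ t ∈ closedBall s n, HasDerivAt w (f t (c (w t))) t ∧ w t ∈ univ := fun w hw hwb t _ =>
    ⟨by rw [hceq _ (abs_le.1 (hwb t))]; exact hw t, trivial⟩
  have hzB : ∀ t ∈ closedBall s n, HasDerivAt z (f t (c (z t))) t ∧ z t ∈ univ :=
    fun t ht => ⟨hz t (hball ht), trivial⟩
  have hvB : ∀ t ∈ closedBall s n, LipschitzOnWith (K * 1) (fun z => f t (c z)) univ :=
    fun t ht => (hv t (Ioo_subset_Icc_self (hball ht))).lipschitzOnWith
  have hsB : s ∈ closedBall s n := mem_closedBall_self (Nat.cast_nonneg n)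
  rw [Real.closedBall_eq_Icc] at hvB hsol hzB hsB ⊢
  refine ⟨z, hzs, fun t ht => ?_⟩
  have hrz := ODE_solution_le_of_mem_Icc hvB (hsol r hr hrb) hzB hsB (hzs ▸ h₁) ht
  have hza := ODE_solution_le_of_mem_Icc hvB hzB (hsol a ha hab) hsB (hzs ▸ h₂) ht
  refine ⟨?_, hrz, hza⟩
  rw [← hceq (z t) ⟨(abs_le.1 (hrb t)).1.trans hrz, hza.trans (abs_le.1 (hab t)).2⟩]
  exact (hzB t ht).1

theorem exists_isSolution_between {r a : ℝ → ℝ}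
    (hcont : Continuous (uncurry f)) (hderiv : ∀ t z, HasDerivAt (f t) (fx t z) z)
    (hfx : Continuous (uncurry fx)) (hr : IsSolution f r) (ha : IsSolution f a)
    (hrb : ∀ t, |r t| ≤ ρ) (hab : ∀ t, |a t| ≤ ρ) {s x₀ : ℝ} (h₁ : r s ≤ x₀) (h₂ : x₀ ≤ a s) :
    ∃ x, IsSolution f x ∧ (∀ t, r t ≤ x t ∧ x t ≤ a t) ∧ x s = x₀ := by
  choose z hzs hz using
    exists_solution_on_closedBall_between hcont hderiv hfx hr ha hrb hab h₁ h₂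
  have hzS : ∀ n : ℕ, ∀ t ∈ closedBall s n, HasDerivAt (z n) (f t (z n t)) t ∧ z n t ∈ Icc (-ρ) ρ :=
    fun n t ht => ⟨(hz n t ht).1, (abs_le.1 (hrb t)).1.trans (hz n t ht).2.1,
      (hz n t ht).2.2.trans (abs_le.1 (hab t)).2⟩
  obtain ⟨x, hx⟩ := exists_forall_eqOn_closedBall (z := z) (s := s) fun m n hmn t ht => by
    have hsub : uIcc s t ⊆ closedBall s m := by
      have hs : s ∈ closedBall s m := mem_closedBall_self (Nat.cast_nonneg m)
      rw [Real.closedBall_eq_Icc] at hs ht ⊢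
      exact uIcc_subset_Icc hs ht
    obtain ⟨K, hK⟩ := exists_lipschitzOnWith_of_hasDerivAt isCompact_uIcc isCompact_Icc
      (convex_Icc (-ρ) ρ) hderiv hfx (T := uIcc s t)
    refine ODE_solution_unique_of_mem_uIcc hK (fun u hu => hzS m u (hsub hu))
      (fun u hu => hzS n u (closedBall_subset_closedBall (Nat.cast_le.2 hmn) (hsub hu)))
      ((hzs m).trans (hzs n).symm) right_mem_uIcc
  have hmem : ∀ t, t ∈ closedBall s ⌈dist t s⌉₊ := fun t => mem_closedBall.2 (Nat.le_ceil _)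
  refine ⟨x, fun t => ?_, fun t => ?_, ?_⟩
  · obtain ⟨n, hn⟩ := exists_nat_gt (dist t s)
    have hnhds : closedBall s n ∈ 𝓝 t := closedBall_mem_nhds_of_mem hn
    rw [hx n (mem_of_mem_nhds hnhds)]
    exact (hz n t (mem_of_mem_nhds hnhds)).1.congr_of_eventuallyEq
      (eventuallyEq_of_mem hnhds (hx n))
  · rw [hx _ (hmem t)]
    exact (hz _ t (hmem t)).2
  · rw [hx _ (hmem s)]
    exact hzs _

theorem exists_isSolution_forall_le (hcont : Continuous (uncurry f))
    (hderiv : ∀ t z, HasDerivAt (f t) (fx t z) z) (hfx : Continuous (uncurry fx))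
    (hbound : ∀ x, IsSolution f x → (∃ M, ∀ t, |x t| ≤ M) → ∀ t, |x t| ≤ ρ)
    {w : ℝ → ℝ} (hw : IsSolution f w) (hwb : ∃ M, ∀ t, |w t| ≤ M) :
    ∃ a, IsSolution f a ∧ (∀ t, |a t| ≤ ρ) ∧
      ∀ x, IsSolution f x → (∃ M, ∀ t, |x t| ≤ M) → ∀ t, x t ≤ a t := by
  set A := {c | ∃ x, IsSolution f x ∧ (∀ t, |x t| ≤ ρ) ∧ x 0 = c}
  have hA : A.Nonempty := ⟨w 0, w, hw, hbound w hw hwb, rfl⟩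
  have hAbdd : BddAbove A := ⟨ρ, by rintro _ ⟨x, -, hxb, rfl⟩; exact (abs_le.1 (hxb 0)).2⟩
  obtain ⟨u, hu, hutend, huA⟩ := exists_seq_tendsto_sSup hA hAbdd
  choose ys hys hyb hy0 using huA
  have hmono : ∀ t, Monotone fun n => ys n t := fun t m n hmn =>
    (hys m).le_of_le hderiv hfx (hys n) (hyb m) (hyb n) (s := 0)
      (by rw [hy0, hy0]; exact hu hmn) t
  have hbdd : ∀ t, BddAbove (range fun n => ys n t) :=
    fun t => ⟨ρ, by rintro _ ⟨n, rfl⟩; exact (abs_le.1 (hyb n t)).2⟩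
  have hlim := fun t => tendsto_atTop_ciSup (hmono t) (hbdd t)
  have ha := IsSolution.of_tendsto hcont hys hyb hlim
  have hab : ∀ t, |⨆ n, ys n t| ≤ ρ := fun t => le_of_tendsto' (hlim t).abs fun n => hyb n t
  have ha0 : ⨆ n, ys n 0 = sSup A := tendsto_nhds_unique (hlim 0) (by simpa only [hy0] using hutend)
  refine ⟨fun t => ⨆ n, ys n t, ha, hab, fun x hx hxb t => ?_⟩
  have hxρ := hbound x hx hxb
  exact hx.le_of_le hderiv hfx ha hxρ hab (s := 0) (ha0 ▸ le_csSup hAbdd ⟨x, hx, hxρ, rfl⟩) t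

theorem exists_isSolution_forall_ge (hcont : Continuous (uncurry f))
    (hderiv : ∀ t z, HasDerivAt (f t) (fx t z) z) (hfx : Continuous (uncurry fx))
    (hbound : ∀ x, IsSolution f x → (∃ M, ∀ t, |x t| ≤ M) → ∀ t, |x t| ≤ ρ)
    {w : ℝ → ℝ} (hw : IsSolution f w) (hwb : ∃ M, ∀ t, |w t| ≤ M) :
    ∃ r, IsSolution f r ∧ (∀ t, |r t| ≤ ρ) ∧
      ∀ x, IsSolution f x → (∃ M, ∀ t, |x t| ≤ M) → ∀ t, r t ≤ x t := by
  -- `x ↦ -x` maps solutions of `f` to solutions of `fun t z => -f t (-z)`, reversing order.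
  have hneg_neg : (fun t z => -(-f t (-(-z)))) = f := by simp
  have hneg_bdd : ∀ x : ℝ → ℝ, (∃ M, ∀ t, |x t| ≤ M) → ∃ M, ∀ t, |(-x) t| ≤ M :=
    fun x ⟨M, hM⟩ => ⟨M, fun t => by simpa using hM t⟩
  obtain ⟨a, ha, hab, hmax⟩ := exists_isSolution_forall_le (f := fun t z => -f t (-z))
    (fx := fun t z => fx t (-z))
    (hcont.comp (continuous_fst.prodMk continuous_snd.neg)).neg
    (fun t z => by simpa using ((hderiv t (-z)).comp z (hasDerivAt_neg z)).fun_neg)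
    (hfx.comp (continuous_fst.prodMk continuous_snd.neg))
    (fun x hx hxb t => by simpa using hbound _ (hneg_neg ▸ hx.neg) (hneg_bdd x hxb) t)
    hw.neg (hneg_bdd w hwb)
  refine ⟨-a, hneg_neg ▸ ha.neg, fun t => by simpa using hab t, fun x hx hxb t => ?_⟩
  simpa [neg_le] using hmax (-x) hx.neg (hneg_bdd x hxb) t

theorem concave_bounded_solution_set_structure_general
    (f fx : ℝ → ℝ → ℝ)
    (hcont : Continuous fun p : ℝ × ℝ => f p.1 p.2)
    (hderiv : ∀ t x, HasDerivAt (f t) (fx t x) x)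
    (hfxcont : Continuous fun p : ℝ × ℝ => fx p.1 p.2)
    (hcoer : ∃ δ > (0:ℝ), ∃ ρ₀ > (0:ℝ), ∀ t x : ℝ, ρ₀ ≤ |x| → f t x ≤ -δ * |x|)
    (B : Set (ℝ × ℝ))
    (hB : B = {p : ℝ × ℝ | ∃ x : ℝ → ℝ,
      (∀ t, HasDerivAt x (f t (x t)) t) ∧ (∃ M, ∀ t, |x t| ≤ M) ∧ x p.1 = p.2})
    (hne : B.Nonempty) :
    (∃ M : ℝ, ∀ p ∈ B, |p.2| ≤ M) ∧
    ∃ r a : ℝ → ℝ,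
      (∀ t, HasDerivAt r (f t (r t)) t) ∧
      (∀ t, HasDerivAt a (f t (a t)) t) ∧
      (∃ M, ∀ t, |r t| ≤ M ∧ |a t| ≤ M) ∧
      (∀ t, r t ≤ a t) ∧
      (∀ s x₀ : ℝ, (s, x₀) ∈ B ↔ r s ≤ x₀ ∧ x₀ ≤ a s) := by
  obtain ⟨δ, hδ, ρ, hρ, hco⟩ := hcoer
  have hbound : ∀ x, IsSolution f x → (∃ M, ∀ t, |x t| ≤ M) → ∀ t, |x t| ≤ ρ :=
    fun x hx hxb t => (hx.abs_lt_of_bounded hδ hρ hco hxb t).le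
  subst hB
  obtain ⟨_, w, hw, hwb, -⟩ := hne
  obtain ⟨a, ha, hab, hamax⟩ := exists_isSolution_forall_le hcont hderiv hfxcont hbound hw hwb
  obtain ⟨r, hr, hrb, hrmin⟩ := exists_isSolution_forall_ge hcont hderiv hfxcont hbound hw hwb
  refine ⟨⟨ρ, ?_⟩, r, a, hr, ha, ⟨ρ, fun t => ⟨hrb t, hab t⟩⟩, hamax r hr ⟨ρ, hrb⟩,
    fun s x₀ => ⟨?_, ?_⟩⟩
  · rintro ⟨s, x₀⟩ ⟨x, hx, hxb, hxs : x s = x₀⟩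
    exact hxs ▸ hbound x hx hxb s
  · rintro ⟨x, hx, hxb, hxs : x s = x₀⟩
    exact hxs ▸ ⟨hrmin x hx hxb s, hamax x hx hxb s⟩
  · rintro ⟨h₁, h₂⟩
    obtain ⟨x, hx, hxra, rfl⟩ :=
      exists_isSolution_between hcont hderiv hfxcont hr ha hrb hab h₁ h₂
    exact ⟨x, hx, ⟨ρ, fun t => abs_le.2 ⟨(abs_le.1 (hrb t)).1.trans (hxra t).1,
      (hxra t).2.trans (abs_le.1 (hab t)).2⟩⟩, rfl⟩

/-- under the concave hypotheses, the set of globally bounded solutions,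
if nonempty, is uniformly bounded and is delimited by two bounded solutions `r ≤ a`. -/
theorem concave_bounded_solution_set_structure
    (f fx : ℝ → ℝ → ℝ)
    (hcont : Continuous fun p : ℝ × ℝ => f p.1 p.2)
    (hderiv : ∀ t x, HasDerivAt (f t) (fx t x) x)
    (hfxcont : Continuous fun p : ℝ × ℝ => fx p.1 p.2)
    (hcoer : ∃ δ > (0:ℝ), ∃ ρ₀ > (0:ℝ), ∀ t x : ℝ, ρ₀ ≤ |x| → f t x ≤ -δ * |x|)
    (hconc : ∀ j : ℕ, ∃ δ > (0:ℝ), ∀ t : ℝ,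
      ∀ x₁ ∈ Set.Icc (-(j:ℝ)) (j:ℝ), ∀ x₂ ∈ Set.Icc (-(j:ℝ)) (j:ℝ), x₁ ≠ x₂ →
        (fx t x₂ - fx t x₁) / (x₂ - x₁) < -δ)
    (B : Set (ℝ × ℝ))
    (hB : B = {p : ℝ × ℝ | ∃ x : ℝ → ℝ,
      (∀ t, HasDerivAt x (f t (x t)) t) ∧ (∃ M, ∀ t, |x t| ≤ M) ∧ x p.1 = p.2})
    (hne : B.Nonempty) :
    (∃ M : ℝ, ∀ p ∈ B, |p.2| ≤ M) ∧
    ∃ r a : ℝ → ℝ,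
      (∀ t, HasDerivAt r (f t (r t)) t) ∧
      (∀ t, HasDerivAt a (f t (a t)) t) ∧
      (∃ M, ∀ t, |r t| ≤ M ∧ |a t| ≤ M) ∧
      (∀ t, r t ≤ a t) ∧
      (∀ s x₀ : ℝ, (s, x₀) ∈ B ↔ r s ≤ x₀ ∧ x₀ ≤ a s) :=
  concave_bounded_solution_set_structure_general f fx hcont hderiv hfxcont hcoer B hB hne
end

section
/- Let Ω be a compact metric space with continuous flow σ admitting a point ω₀ with dense orbit. Let Ω₋ be the α-limit set of ω₀ and Ω₊ its ω-limit set. Then Ω = Ω₋ ∪ {ω₀·t : t ∈ ℝ} ∪ Ω₊. Moreover, if Ω ≠ Ω₋ and Ω ≠ Ω₊, then the set of points with dense orbit is exactly the orbit of ω₀. -/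
/-!
A point outside both limit sets of `ω₀` is, for some `a` and `b`, in the closure of neither the
past half-orbit `ω₀·(-∞, a]` nor the future half-orbit `ω₀·[b, ∞)`. Being in the closure of the
whole orbit, it lies in the closure of the middle arc `ω₀·[a, b]`, which is compact and hence
closed, so the point is on the orbit.

Both limit sets are closed and invariant, so a point with dense orbit lies in neither of them
unless that limit set is everything; by the decomposition such a point is then on the orbit of
`ω₀`, and conversely every point of that orbit has the same orbit as `ω₀`.
-/

open Set

section Flow

variable {X : Type*} [TopologicalSpace X] (σ : ℝ → X → X)

def alphaLimitSet (x : X) : Set X := ⋂ s : ℝ, closure {y | ∃ t ≤ -s, σ t x = y}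

def omegaLimitSet (x : X) : Set X := ⋂ s : ℝ, closure {y | ∃ t ≥ s, σ t x = y}

theorem isClosed_alphaLimitSet (x : X) : IsClosed (alphaLimitSet σ x) :=
  isClosed_iInter fun _ => isClosed_closure

theorem isClosed_omegaLimitSet (x : X) : IsClosed (omegaLimitSet σ x) :=
  isClosed_iInter fun _ => isClosed_closure

variable {σ}

theorem isInvariant_alphaLimitSet (hadd : ∀ s t x, σ (s + t) x = σ s (σ t x))
    (hσ : ∀ u, Continuous (σ u)) (x : X) : IsInvariant σ (alphaLimitSet σ x) := by
  intro u y hy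
  refine mem_iInter.2 fun s => ((?_ : MapsTo (σ u) _ _).closure (hσ u)) (mem_iInter.1 hy (s + u))
  rintro _ ⟨t, ht, rfl⟩
  exact ⟨u + t, by linarith, hadd u t x⟩

theorem isInvariant_omegaLimitSet (hadd : ∀ s t x, σ (s + t) x = σ s (σ t x))
    (hσ : ∀ u, Continuous (σ u)) (x : X) : IsInvariant σ (omegaLimitSet σ x) := by
  intro u y hy
  refine mem_iInter.2 fun s => ((?_ : MapsTo (σ u) _ _).closure (hσ u)) (mem_iInter.1 hy (s - u))
  rintro _ ⟨t, ht, rfl⟩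
  exact ⟨u + t, by linarith, hadd u t x⟩

theorem not_dense_range_of_mem_isInvariant {S : Set X} (hS : IsClosed S) (hinv : IsInvariant σ S)
    (hne : S ≠ univ) {x : X} (hx : x ∈ S) : ¬ Dense (range fun t => σ t x) := fun hdense =>
  have hsub : (range fun t => σ t x) ⊆ S := by
    rintro _ ⟨t, rfl⟩
    exact hinv t hx
  hne (hS.closure_eq ▸ (hdense.mono hsub).closure_eq)

end Flow

theorem range_orbit_apply {X : Type*} {σ : ℝ → X → X}
    (hadd : ∀ s t x, σ (s + t) x = σ s (σ t x)) (t₀ : ℝ) (x : X) :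
    (range fun t => σ t (σ t₀ x)) = range fun t => σ t x := by
  have hshift : (fun t => σ t (σ t₀ x)) = (fun t => σ t x) ∘ (· + t₀) :=
    funext fun t => (hadd t t₀ x).symm
  rw [hshift, (add_right_surjective t₀).range_comp]

theorem closure_range_subset_of_continuous {X : Type*} [TopologicalSpace X] [T2Space X]
    {f : ℝ → X} (hf : Continuous f) (a b : ℝ) :
    closure (range f) ⊆ closure (f '' Iic a) ∪ f '' Icc a b ∪ closure (f '' Ici b) := by
  have hcover : range f ⊆ f '' Iic a ∪ f '' Icc a b ∪ f '' Ici b := by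
    rintro _ ⟨t, rfl⟩
    rcases le_total t a with hta | hat
    · exact Or.inl (Or.inl ⟨t, hta, rfl⟩)
    rcases le_total t b with htb | hbt
    · exact Or.inl (Or.inr ⟨t, ⟨hat, htb⟩, rfl⟩)
    · exact Or.inr ⟨t, hbt, rfl⟩
  have hclosed : IsClosed (f '' Icc a b) := (isCompact_Icc.image hf).isClosed
  simpa only [closure_union, hclosed.closure_eq] using closure_mono hcover

theorem univ_eq_alphaLimitSet_union_range_union_omegaLimitSet {X : Type*} [TopologicalSpace X]
    [T2Space X] {σ : ℝ → X → X} {x : X} (hcont : Continuous fun t => σ t x)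
    (hdense : Dense (range fun t => σ t x)) :
    univ = alphaLimitSet σ x ∪ (range fun t => σ t x) ∪ omegaLimitSet σ x := by
  refine (eq_univ_of_forall fun y => ?_).symm
  by_contra hy
  simp only [alphaLimitSet, omegaLimitSet, mem_union, mem_iInter, not_or, not_forall] at hy
  obtain ⟨⟨⟨s₁, hpast⟩, horbit⟩, ⟨s₂, hfuture⟩⟩ := hy
  rcases closure_range_subset_of_continuous hcont (-s₁) s₂ (hdense y) with (h | ⟨t, -, rfl⟩) | h
  · exact hpast h
  · exact horbit ⟨t, rfl⟩
  · exact hfuture h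

theorem transitive_hull_structure_general
    {Ω : Type*} [MetricSpace Ω]
    (σ : ℝ → Ω → Ω)
    (hcont : Continuous fun p : ℝ × Ω => σ p.1 p.2)
    (hadd : ∀ s t ω, σ (s + t) ω = σ s (σ t ω))
    (ω₀ : Ω)
    (hdense : Dense (Set.range fun t : ℝ => σ t ω₀))
    (Ωminus Ωplus : Set Ω)
    (hα : Ωminus = ⋂ s : ℝ, closure {x : Ω | ∃ t ≤ -s, σ t ω₀ = x})
    (hω : Ωplus = ⋂ s : ℝ, closure {x : Ω | ∃ t ≥ s, σ t ω₀ = x}) :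
    (Set.univ : Set Ω) = Ωminus ∪ (Set.range fun t : ℝ => σ t ω₀) ∪ Ωplus ∧
    ((Ωminus ≠ Set.univ ∧ Ωplus ≠ Set.univ) →
      {ω : Ω | Dense (Set.range fun t : ℝ => σ t ω)}
        = Set.range fun t : ℝ => σ t ω₀) := by
  change Ωminus = alphaLimitSet σ ω₀ at hα
  change Ωplus = omegaLimitSet σ ω₀ at hω
  subst hα hω
  have hσ : ∀ u, Continuous (σ u) := fun u => hcont.comp (Continuous.prodMk_right u)
  have hdecomp := univ_eq_alphaLimitSet_union_range_union_omegaLimitSet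
    (hcont.comp (Continuous.prodMk_left ω₀) : Continuous fun t => σ t ω₀) hdense
  refine ⟨hdecomp, fun ⟨hne_alpha, hne_omega⟩ => Subset.antisymm ?_ ?_⟩
  · intro ω hω
    rcases (hdecomp ▸ mem_univ ω : ω ∈ _) with (h | h) | h
    · exact absurd hω (not_dense_range_of_mem_isInvariant (isClosed_alphaLimitSet σ ω₀)
        (isInvariant_alphaLimitSet hadd hσ ω₀) hne_alpha h)
    · exact h
    · exact absurd hω (not_dense_range_of_mem_isInvariant (isClosed_omegaLimitSet σ ω₀)
        (isInvariant_omegaLimitSet hadd hσ ω₀) hne_omega h)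
  · rintro _ ⟨t₀, rfl⟩
    show Dense _
    rw [range_orbit_apply hadd t₀ ω₀]
    exact hdense

/-- if `ω₀` has dense orbit under a continuous flow on a compact metric
space, then the space decomposes as the α-limit set of `ω₀`, the orbit of `ω₀`, and
the ω-limit set of `ω₀`; if moreover both limit sets are proper, the points with dense
orbit are exactly the orbit of `ω₀`. -/
theorem transitive_hull_structure
    {Ω : Type*} [MetricSpace Ω] [CompactSpace Ω]
    (σ : ℝ → Ω → Ω)
    (hcont : Continuous fun p : ℝ × Ω => σ p.1 p.2)
    (hzero : ∀ ω, σ 0 ω = ω)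
    (hadd : ∀ s t ω, σ (s + t) ω = σ s (σ t ω))
    (ω₀ : Ω)
    (hdense : Dense (Set.range fun t : ℝ => σ t ω₀))
    (Ωminus Ωplus : Set Ω)
    (hα : Ωminus = ⋂ s : ℝ, closure {x : Ω | ∃ t ≤ -s, σ t ω₀ = x})
    (hω : Ωplus = ⋂ s : ℝ, closure {x : Ω | ∃ t ≥ s, σ t ω₀ = x}) :
    (Set.univ : Set Ω) = Ωminus ∪ (Set.range fun t : ℝ => σ t ω₀) ∪ Ωplus ∧
    ((Ωminus ≠ Set.univ ∧ Ωplus ≠ Set.univ) →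
      {ω : Ω | Dense (Set.range fun t : ℝ => σ t ω)}
        = Set.range fun t : ℝ => σ t ω₀) :=
  transitive_hull_structure_general σ hcont hadd ω₀ hdense Ωminus Ωplus hα hω
end

section
/- Let ω₀ belong to the set of points with dense orbit of a continuous flow on a compact metric space Ω, and consider the family x' = 𝔥(ω·t, x) + γ for a continuous 𝔥: Ω × ℝ → ℝ, locally Lipschitz in x. If for some γ the equation corresponding to ω₀ has two uniformly separated bounded solutions (with separation constant d > 0), then for every ω in the closure of the orbit of ω₀ (hence every ω ∈ Ω) the corresponding equation x' = 𝔥(ω·t,x) + γ has two bounded solutions separated by at least d. -/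
open Filter Topology NNReal MeasureTheory

/-! Choose times `sₙ` with `σ sₙ ω₀ → ω`, using the dense orbit. The translates
`t ↦ xᵢ (t + sₙ)` solve the equations over `σ sₙ ω₀`; they are bounded by `M` and, the vector
field being bounded on the compact set `Ω × [-M, M]`, uniformly Lipschitz. A pointwise
Arzelà–Ascoli extraction yields a subsequence converging pointwise to some `yᵢ`. Passing to the
limit in the integral equation by dominated convergence shows that `yᵢ` solves the equation
over `ω`, and the bound `M` and the separation `d` survive pointwise limits. -/

section Extraction

variable {X E : Type*} [PseudoMetricSpace X] [PseudoMetricSpace E]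

theorem cauchySeq_of_lipschitzWith_of_dense {f : ℕ → X → E} {K : ℝ≥0}
    (hf : ∀ n, LipschitzWith K (f n)) {D : Set X} (hD : Dense D)
    (hD_cauchy : ∀ q ∈ D, CauchySeq fun n => f n q) (x : X) :
    CauchySeq fun n => f n x := by
  rw [Metric.cauchySeq_iff]
  intro ε hε
  obtain ⟨δ, hδ, hKδ⟩ := exists_pos_mul_lt (show 0 < ε / 3 by positivity) K
  obtain ⟨q, hqD, hxq⟩ := hD.exists_dist_lt x hδ
  obtain ⟨N, hN⟩ := Metric.cauchySeq_iff.1 (hD_cauchy q hqD) (ε / 3) (by positivity)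
  have hclose : ∀ n, dist (f n x) (f n q) < ε / 3 := fun n =>
    ((hf n).dist_le_mul x q).trans_lt ((mul_le_mul_of_nonneg_left hxq.le K.2).trans_lt hKδ)
  refine ⟨N, fun m hm n hn => ?_⟩
  calc dist (f m x) (f n x)
      ≤ dist (f m x) (f m q) + dist (f m q) (f n q) + dist (f n q) (f n x) := dist_triangle4 ..
    _ < ε / 3 + ε / 3 + ε / 3 := by
        gcongr
        exacts [hclose m, hN m hm n hn, dist_comm (f n q) _ ▸ hclose n]
    _ = ε := by ring

theorem exists_subseq_tendsto_of_lipschitzWith [TopologicalSpace.SeparableSpace X]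
    {f : ℕ → X → E} {K : ℝ≥0} (hf : ∀ n, LipschitzWith K (f n)) {S : Set E} (hS : IsCompact S)
    (hfS : ∀ n x, f n x ∈ S) :
    ∃ φ : ℕ → ℕ, StrictMono φ ∧ ∃ y : X → E, ∀ x, Tendsto (fun k => f (φ k) x) atTop (𝓝 (y x)) := by
  obtain ⟨D, hD_countable, hD⟩ := TopologicalSpace.exists_countable_dense X
  have : Countable D := hD_countable.to_subtype
  have : CompactSpace S := isCompact_iff_compactSpace.1 hS
  obtain ⟨g, φ, hφ, hg⟩ := CompactSpace.tendsto_subseq fun n (q : D) => (⟨f n q, hfS n q⟩ : S)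
  have hD_cauchy : ∀ q ∈ D, CauchySeq fun k => f (φ k) q := fun q hq =>
    (continuous_subtype_val.tendsto _ |>.comp <|
      (continuous_apply (⟨q, hq⟩ : D)).tendsto _ |>.comp hg).cauchySeq
  choose y hyS hy using fun x => cauchySeq_tendsto_of_isComplete hS.isComplete (fun k => hfS _ x)
    (cauchySeq_of_lipschitzWith_of_dense (fun k => hf (φ k)) hD hD_cauchy x)
  exact ⟨φ, hφ, y, hy⟩

end Extraction

theorem lipschitzWith_of_hasDerivAt_norm_le {x g : ℝ → ℝ} (hx : ∀ t, HasDerivAt x (g t) t)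
    {C : ℝ≥0} (hg : ∀ t, ‖g t‖ ≤ C) : LipschitzWith C x :=
  lipschitzWith_of_nnnorm_deriv_le (fun t => (hx t).differentiableAt) fun t => by
    rw [(hx t).deriv, ← NNReal.coe_le_coe, coe_nnnorm]
    exact hg t

section LimitOfSolutions

variable {P ι : Type*} {F : P → ℝ → ℝ → ℝ} {l : Filter ι}
  {p : ι → P} {p₀ : P} {z : ι → ℝ → ℝ} {C : ℝ≥0} {y : ℝ → ℝ}

theorem lipschitzWith_of_tendsto_solutions [l.NeBot]
    (hz : ∀ n t, HasDerivAt (z n) (F (p n) t (z n t)) t) (hC : ∀ n t, ‖F (p n) t (z n t)‖ ≤ C)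
    (hy : ∀ t, Tendsto (fun n => z n t) l (𝓝 (y t))) : LipschitzWith C y :=
  (isClosed_setOfPred_lipschitzWith C).mem_of_tendsto (tendsto_pi_nhds.2 hy)
    (Eventually.of_forall fun n => lipschitzWith_of_hasDerivAt_norm_le (hz n) (hC n))

variable [TopologicalSpace P]

theorem Continuous.field_along_curve (hF : Continuous fun q : P × ℝ × ℝ => F q.1 q.2.1 q.2.2)
    (q : P) {x : ℝ → ℝ} (hx : Continuous x) : Continuous fun t => F q t (x t) :=
  hF.comp (continuous_const.prodMk (continuous_id.prodMk hx))

theorem sub_eq_integral_of_tendsto_solutions [l.IsCountablyGenerated] [l.NeBot]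
    (hF : Continuous fun q : P × ℝ × ℝ => F q.1 q.2.1 q.2.2) (hp : Tendsto p l (𝓝 p₀))
    (hz : ∀ n t, HasDerivAt (z n) (F (p n) t (z n t)) t) (hC : ∀ n t, ‖F (p n) t (z n t)‖ ≤ C)
    (hy : ∀ t, Tendsto (fun n => z n t) l (𝓝 (y t))) (t : ℝ) :
    y t - y 0 = ∫ u in (0 : ℝ)..t, F p₀ u (y u) := by
  have hzc : ∀ n, Continuous (z n) := fun n =>
    continuous_iff_continuousAt.2 fun t => (hz n t).continuousAt
  have hz_int : ∀ n, z n t - z n 0 = ∫ u in (0 : ℝ)..t, F (p n) u (z n u) := fun n =>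
    (intervalIntegral.integral_eq_sub_of_hasDerivAt (fun u _ => hz n u)
      ((hF.field_along_curve _ (hzc n)).intervalIntegrable _ _)).symm
  have h_dct : Tendsto (fun n => ∫ u in (0 : ℝ)..t, F (p n) u (z n u)) l
      (𝓝 (∫ u in (0 : ℝ)..t, F p₀ u (y u))) :=
    intervalIntegral.tendsto_integral_filter_of_dominated_convergence (fun _ => (C : ℝ))
      (Eventually.of_forall fun n => (hF.field_along_curve _ (hzc n)).aestronglyMeasurable)
      (Eventually.of_forall fun n => ae_of_all _ fun u _ => hC n u)
      intervalIntegrable_const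
      (ae_of_all _ fun u _ => (hF.tendsto (p₀, u, y u)).comp
        (hp.prodMk_nhds (tendsto_const_nhds.prodMk_nhds (hy u))))
  exact tendsto_nhds_unique ((hy t).sub (hy 0)) (by simpa only [hz_int] using h_dct)

theorem hasDerivAt_of_tendsto_solutions [l.IsCountablyGenerated] [l.NeBot]
    (hF : Continuous fun q : P × ℝ × ℝ => F q.1 q.2.1 q.2.2) (hp : Tendsto p l (𝓝 p₀))
    (hz : ∀ n t, HasDerivAt (z n) (F (p n) t (z n t)) t) (hC : ∀ n t, ‖F (p n) t (z n t)‖ ≤ C)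
    (hy : ∀ t, Tendsto (fun n => z n t) l (𝓝 (y t))) (t : ℝ) :
    HasDerivAt y (F p₀ t (y t)) t := by
  have hyc : Continuous y := (lipschitzWith_of_tendsto_solutions hz hC hy).continuous
  refine ((hF.field_along_curve p₀ hyc).integral_hasStrictDerivAt 0 t).hasDerivAt.const_add (y 0)
    |>.congr_of_eventuallyEq (Eventually.of_forall fun τ => ?_)
  dsimp only
  rw [← sub_eq_integral_of_tendsto_solutions hF hp hz hC hy τ, add_sub_cancel]

end LimitOfSolutions

theorem exists_nnreal_bound_of_abs_le {Ω E : Type*} [TopologicalSpace Ω] [CompactSpace Ω]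
    [SeminormedAddCommGroup E] {f : Ω → ℝ → E} (hf : Continuous fun p : Ω × ℝ => f p.1 p.2)
    (M : ℝ) : ∃ C : ℝ≥0, ∀ ω v, |v| ≤ M → ‖f ω v‖ ≤ C := by
  obtain ⟨C, hC⟩ := (isCompact_univ.prod (isCompact_Icc (a := -M) (b := M)))
    |>.exists_bound_of_continuousOn hf.continuousOn
  exact ⟨C.toNNReal, fun ω v hv =>
    (hC (ω, v) ⟨trivial, abs_le.1 hv⟩).trans (Real.le_coe_toNNReal C)⟩

theorem DenseRange.exists_seq_tendsto {α β : Type*} [TopologicalSpace α] [FrechetUrysohnSpace α]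
    {f : β → α} (hf : DenseRange f) (a : α) : ∃ u : ℕ → β, Tendsto (f ∘ u) atTop (𝓝 a) := by
  obtain ⟨w, hw, hw_lim⟩ := mem_closure_iff_seq_limit.1 (hf a)
  choose u hu using hw
  exact ⟨u, by simpa only [Function.comp_def, hu] using hw_lim⟩

theorem hasDerivAt_translate {Ω : Type*} {σ : ℝ → Ω → Ω}
    (hadd : ∀ s t ω, σ (s + t) ω = σ s (σ t ω)) {G : Ω → ℝ → ℝ} {ω₀ : Ω} {x : ℝ → ℝ}
    (hx : ∀ t, HasDerivAt x (G (σ t ω₀) (x t)) t) (s t : ℝ) :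
    HasDerivAt (fun u => x (u + s)) (G (σ t (σ s ω₀)) (x (t + s))) t := by
  simpa only [hadd] using (hx (t + s)).comp_add_const t s

theorem separation_propagates_through_hull_general
    {Ω : Type*} [MetricSpace Ω] [CompactSpace Ω]
    (σ : ℝ → Ω → Ω)
    (hcont : Continuous fun p : ℝ × Ω => σ p.1 p.2)
    (hadd : ∀ s t ω, σ (s + t) ω = σ s (σ t ω))
    (H : Ω → ℝ → ℝ)
    (hHcont : Continuous fun p : Ω × ℝ => H p.1 p.2)
    (γ : ℝ)
    (ω₀ : Ω) (hdense : Dense (Set.range fun t : ℝ => σ t ω₀))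
    (d : ℝ)
    (x₁ x₂ : ℝ → ℝ)
    (hx₁ : ∀ t, HasDerivAt x₁ (H (σ t ω₀) (x₁ t) + γ) t)
    (hx₂ : ∀ t, HasDerivAt x₂ (H (σ t ω₀) (x₂ t) + γ) t)
    (hbdd : ∃ M, ∀ t, |x₁ t| ≤ M ∧ |x₂ t| ≤ M)
    (hsep : ∀ t, d ≤ x₂ t - x₁ t) :
    ∀ ω : Ω, ∃ y₁ y₂ : ℝ → ℝ,
      (∀ t, HasDerivAt y₁ (H (σ t ω) (y₁ t) + γ) t) ∧
      (∀ t, HasDerivAt y₂ (H (σ t ω) (y₂ t) + γ) t) ∧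
      (∃ M, ∀ t, |y₁ t| ≤ M ∧ |y₂ t| ≤ M) ∧
      (∀ t, d ≤ y₂ t - y₁ t) := by
  intro ω
  obtain ⟨M, hM⟩ := hbdd
  obtain ⟨C, hC⟩ := exists_nnreal_bound_of_abs_le (f := fun ϖ v => H ϖ v + γ) (by fun_prop) M
  obtain ⟨s, hs⟩ := DenseRange.exists_seq_tendsto hdense ω
  have hz₁ := hasDerivAt_translate (G := fun ϖ v => H ϖ v + γ) hadd hx₁
  have hz₂ := hasDerivAt_translate (G := fun ϖ v => H ϖ v + γ) hadd hx₂
  obtain ⟨φ₁, hφ₁, y₁, hy₁⟩ := exists_subseq_tendsto_of_lipschitzWith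
    (fun n => lipschitzWith_of_hasDerivAt_norm_le (hz₁ (s n)) fun t => hC _ _ (hM _).1)
    isCompact_Icc fun n t => abs_le.1 (hM (t + s n)).1
  obtain ⟨φ₂, hφ₂, y₂, hy₂⟩ := exists_subseq_tendsto_of_lipschitzWith
    (fun n => lipschitzWith_of_hasDerivAt_norm_le (hz₂ (s (φ₁ n))) fun t => hC _ _ (hM _).2)
    isCompact_Icc fun n t => abs_le.1 (hM (t + s (φ₁ n))).2
  have hy₁' t := (hy₁ t).comp hφ₂.tendsto_atTop
  have hs' := hs.comp (hφ₁.comp hφ₂).tendsto_atTop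
  have hF : Continuous fun q : Ω × ℝ × ℝ => H (σ q.2.1 q.1) q.2.2 + γ := by fun_prop
  refine ⟨y₁, y₂, fun t => ?_, fun t => ?_, ⟨M, fun t => ⟨?_, ?_⟩⟩, fun t => ?_⟩
  · exact hasDerivAt_of_tendsto_solutions (F := fun ϖ t v => H (σ t ϖ) v + γ) hF hs'
      (fun n => hz₁ _) (fun n t => hC _ _ (hM _).1) hy₁' t
  · exact hasDerivAt_of_tendsto_solutions (F := fun ϖ t v => H (σ t ϖ) v + γ) hF hs'
      (fun n => hz₂ _) (fun n t => hC _ _ (hM _).2) hy₂ t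
  · exact le_of_tendsto (hy₁' t).abs (Eventually.of_forall fun n => (hM _).1)
  · exact le_of_tendsto (hy₂ t).abs (Eventually.of_forall fun n => (hM _).2)
  · exact ge_of_tendsto ((hy₂ t).sub (hy₁' t)) (Eventually.of_forall fun n => hsep _)

/-- propagation of uniform separation through the hull. In the
skewproduct setting, if the equation over a point `ω₀` with dense orbit has two
bounded solutions separated by `d > 0`, then for every `ω` in the (compact) base the
equation `x' = 𝔥(ω·t, x) + γ` has two bounded solutions separated by `d`. -/
theorem separation_propagates_through_hull
    {Ω : Type*} [MetricSpace Ω] [CompactSpace Ω]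
    (σ : ℝ → Ω → Ω)
    (hcont : Continuous fun p : ℝ × Ω => σ p.1 p.2)
    (hzero : ∀ ω, σ 0 ω = ω)
    (hadd : ∀ s t ω, σ (s + t) ω = σ s (σ t ω))
    (H : Ω → ℝ → ℝ)
    (hHcont : Continuous fun p : Ω × ℝ => H p.1 p.2)
    (hHlip : ∀ ω, LocallyLipschitz (H ω))
    (γ : ℝ)
    (ω₀ : Ω) (hdense : Dense (Set.range fun t : ℝ => σ t ω₀))
    (d : ℝ) (hd : 0 < d)
    (x₁ x₂ : ℝ → ℝ)
    (hx₁ : ∀ t, HasDerivAt x₁ (H (σ t ω₀) (x₁ t) + γ) t)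
    (hx₂ : ∀ t, HasDerivAt x₂ (H (σ t ω₀) (x₂ t) + γ) t)
    (hbdd : ∃ M, ∀ t, |x₁ t| ≤ M ∧ |x₂ t| ≤ M)
    (hsep : ∀ t, d ≤ x₂ t - x₁ t) :
    ∀ ω : Ω, ∃ y₁ y₂ : ℝ → ℝ,
      (∀ t, HasDerivAt y₁ (H (σ t ω) (y₁ t) + γ) t) ∧
      (∀ t, HasDerivAt y₂ (H (σ t ω) (y₂ t) + γ) t) ∧
      (∃ M, ∀ t, |y₁ t| ≤ M ∧ |y₂ t| ≤ M) ∧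
      (∀ t, d ≤ y₂ t - y₁ t) :=
  separation_propagates_through_hull_general σ hcont hadd H hHcont γ ω₀ hdense d x₁ x₂ hx₁ hx₂ hbdd
    hsep
end
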